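/- Under the parametric substitution dt = 2b dη with b(η) = C₁cosh²η and a(η) = [M(η cosh η - sinh η) + C₀ cosh η]/sinh η, the functions a, b satisfy the Kantowski-Sachs (k = -1) dust equation 2b_tt/b + (b_t/b)² - 1/b² = 0, where t-derivatives are computed via d/dt = (1/(2b))·d/dη. -/

import Mathlib

open Real

theorem Real.hasDerivAt_tanh (x : ℝ) : HasDerivAt tanh (1 - tanh x ^ 2) x := by
  have hcosh : cosh x ≠ 0 := (cosh_pos x).ne'
  rw [show tanh = fun y => sinh y / cosh y from funext tanh_eq_sinh_div_cosh]
  refine ((hasDerivAt_sinh x).div (hasDerivAt_cosh x) hcosh).congr_deriv ?_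
  field_simp

/-- The derivative `d/dt = (1 / (2b)) d/dη` of the parametrisation `dt = 2b dη`. -/
noncomputable def timeDeriv (b f : ℝ → ℝ) : ℝ → ℝ := fun s => 1 / (2 * b s) * deriv f s

theorem timeDeriv_self_const_mul_cosh_sq {c : ℝ} (hc : c ≠ 0) :
    timeDeriv (fun s => c * cosh s ^ 2) (fun s => c * cosh s ^ 2) = tanh := by
  funext s
  have hlog : logDeriv (fun s => c * cosh s ^ 2) s = 2 * tanh s := by
    rw [logDeriv_const_mul s c hc, logDeriv_fun_pow differentiableAt_cosh 2, logDeriv_cosh]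
    norm_num
  rw [logDeriv_apply] at hlog
  rw [timeDeriv, one_div_mul_eq_div, mul_comm 2, ← div_div, hlog]
  ring

/-- In terms of `u = b_t`, the dust equation is the Riccati equation `u_η = 1 - u²`. -/
theorem dust_lhs_eq (b u : ℝ → ℝ) (η : ℝ) :
    2 * timeDeriv b u η / b η + (u η / b η) ^ 2 - 1 / b η ^ 2
      = (deriv u η + u η ^ 2 - 1) / b η ^ 2 := by
  rcases eq_or_ne (b η) 0 with hb | hb
  · simp [hb]
  · simp only [timeDeriv]
    field_simp

theorem kantowski_sachs_parametric_solution_general (C₁ : ℝ) (hC₁ : 0 < C₁)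
    (b : ℝ → ℝ)
    (hb : ∀ η, b η = C₁ * Real.cosh η ^ 2) :
    ∀ η : ℝ, Real.sinh η ≠ 0 →
      2 * ((1 / (2 * b η)) * deriv (fun s => (1 / (2 * b s)) * deriv b s) η) / b η
        + ((1 / (2 * b η)) * deriv b η / b η) ^ 2 - 1 / (b η) ^ 2 = 0 := by
  intro η _
  have hbt : timeDeriv b b = tanh := by
    rw [funext hb]
    exact timeDeriv_self_const_mul_cosh_sq hC₁.ne'
  show 2 * timeDeriv b (timeDeriv b b) η / b η + (timeDeriv b b η / b η) ^ 2 - 1 / b η ^ 2 = 0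
  rw [dust_lhs_eq, hbt, (hasDerivAt_tanh η).deriv]
  ring

/-- the parametric Kantowski-Sachs (k = -1) solution satisfies the dust
equation 2 b_tt/b + (b_t/b)² - 1/b² = 0, with d/dt = (1/(2b)) d/dη. -/
theorem kantowski_sachs_parametric_solution (M C₀ C₁ : ℝ) (hM : 0 < M) (hC₁ : 0 < C₁)
    (a b : ℝ → ℝ)
    (ha : ∀ η, Real.sinh η ≠ 0 →
      a η = (M * (η * Real.cosh η - Real.sinh η) + C₀ * Real.cosh η) / Real.sinh η)
    (hb : ∀ η, b η = C₁ * Real.cosh η ^ 2) :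
    ∀ η : ℝ, Real.sinh η ≠ 0 →
      2 * ((1 / (2 * b η)) * deriv (fun s => (1 / (2 * b s)) * deriv b s) η) / b η
        + ((1 / (2 * b η)) * deriv b η / b η) ^ 2 - 1 / (b η) ^ 2 = 0 :=
  kantowski_sachs_parametric_solution_general C₁ hC₁ b hb
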